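/- The q-symmetrization over the variables v_1,…,v_k of U(u_1,…,u_k; v_1,…,v_k), namely Sym_{v̄}(U(ū;v̄)) = Σ_{σ∈S_k} ∏_{ℓ<ℓ′, σ(ℓ)>σ(ℓ′)} (q·v_{σ(ℓ′)} − q⁻¹·v_{σ(ℓ)})/(q⁻¹·v_{σ(ℓ′)} − q·v_{σ(ℓ)}) · U(u_1,…,u_k; v_{σ(1)},…,v_{σ(k)}), is a symmetric function of u_1,…,u_k: it is invariant under the substitution u_i ↦ u_{ρ(i)} for every ρ ∈ S_k. -/

import Mathlib

open scoped BigOperators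
open MvPolynomial

noncomputable section

/-- The base field `ℂ(q)`. -/
abbrev F0 : Type := RatFunc ℂ

/-- The field `K` of rational functions over `ℂ(q)` in the variables
`u₁,…,u_k` (left summand) and `v₁,…,v_k` (right summand). -/
abbrev KU (k : ℕ) : Type := FractionRing (MvPolynomial (Fin k ⊕ Fin k) F0)

variable (k : ℕ)

/-- The element `q` of `K`. -/
def qU : KU k := algebraMap (MvPolynomial (Fin k ⊕ Fin k) F0) _ (C RatFunc.X)

/-- The variable `u_i`. -/
def uV (i : Fin k) : KU k := algebraMap (MvPolynomial (Fin k ⊕ Fin k) F0) _ (X (Sum.inl i))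

/-- The variable `v_i`. -/
def vV (i : Fin k) : KU k := algebraMap (MvPolynomial (Fin k ⊕ Fin k) F0) _ (X (Sum.inr i))

/-- Substitution `u_i ↦ u_{ρ(i)}`, `v_i ↦ v_{τ(i)}` as a field automorphism of `K`. -/
def actUV (ρ τ : Equiv.Perm (Fin k)) : KU k ≃+* KU k :=
  IsFractionRing.ringEquivOfRingEquiv
    (MvPolynomial.renameEquiv F0 (Equiv.sumCongr ρ τ)).toRingEquiv

/-- `U(u₁,…,u_k; v₁,…,v_k)`. -/
def Uel : KU k :=
  (∏ i : Fin k, (vV k i / uV k i) / (1 - vV k i / uV k i)) *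
    ∏ p ∈ Finset.univ.filter (fun p : Fin k × Fin k => p.1 < p.2),
      ((qU k)⁻¹ - qU k * vV k p.1 / uV k p.2) / (1 - vV k p.1 / uV k p.2)

/-- The q-symmetrization over the variables `v₁,…,v_k`. -/
def symV (G : KU k) : KU k :=
  ∑ σ : Equiv.Perm (Fin k),
    (∏ p ∈ Finset.univ.filter
        (fun p : Fin k × Fin k => p.1 < p.2 ∧ σ p.2 < σ p.1),
      (qU k * vV k (σ p.2) - (qU k)⁻¹ * vV k (σ p.1)) /
        ((qU k)⁻¹ * vV k (σ p.2) - qU k * vV k (σ p.1))) *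
      actUV k (Equiv.refl (Fin k)) σ G


/-!
Adjacent transpositions `s = (a b)`, `b = a + 1`, generate `S_k`, so it suffices to prove
invariance under `u_a ↔ u_b`. Pair the summand of `σ` with that of `σ s`, where `σ a < σ b`:
the inversion coefficients satisfy `c(σ s) = F(v_{σ b}, v_{σ a}) c(σ)`, and `U` splits as the
factor involving only the indices `a, b` (two diagonal factors and the `(a, b)` cross factor)
times a remainder invariant under `u_a ↔ u_b` and under `v_a ↔ v_b` separately. After pulling
out the substitution `v ↦ v_σ`, the two summands are therefore exchanged by a single identity
of rational functions in `q, u_a, u_b, v_a, v_b`, i.e. the case `k = 2`.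
-/

open Finset Equiv

section Factors

variable {K L F : Type*} [Field K] [Field L] [FunLike F K L] [RingHomClass F K L]

def diagFactor (u v : K) : K := v / u / (1 - v / u)

def offDiagFactor (q v u : K) : K := (q⁻¹ - q * v / u) / (1 - v / u)

def swapFactor (q v w : K) : K := (q * w - q⁻¹ * v) / (q⁻¹ * w - q * v)

@[simp]
lemma map_diagFactor (φ : F) (u v : K) :
    φ (diagFactor u v) = diagFactor (φ u) (φ v) := by
  simp [diagFactor]

@[simp]
lemma map_offDiagFactor (φ : F) (q v u : K) :
    φ (offDiagFactor q v u) = offDiagFactor (φ q) (φ v) (φ u) := by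
  simp [offDiagFactor]

@[simp]
lemma map_swapFactor (φ : F) (q v w : K) :
    φ (swapFactor q v w) = swapFactor (φ q) (φ v) (φ w) := by
  simp [swapFactor]

lemma diagFactor_eq {u v : K} (hu : u ≠ 0) : diagFactor u v = v / (u - v) := by
  rw [diagFactor, div_div, mul_sub, mul_one, mul_div_cancel₀ _ hu]

lemma offDiagFactor_eq {q u v : K} (hq : q ≠ 0) (hu : u ≠ 0) (huv : u ≠ v) :
    offDiagFactor q v u = (u - q ^ 2 * v) / (q * (u - v)) := by
  have := sub_ne_zero.mpr huv
  rw [offDiagFactor]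
  field_simp

theorem diagFactor_exchange {q x y z t : K} (hq : q ≠ 0) (hx : x ≠ 0) (hy : y ≠ 0)
    (hxz : x ≠ z) (hxt : x ≠ t) (hyz : y ≠ z) (hyt : y ≠ t) (hzt : z ≠ q ^ 2 * t) :
    diagFactor y z * diagFactor x t * offDiagFactor q z x
        + swapFactor q t z * (diagFactor y t * diagFactor x z * offDiagFactor q t x)
      = diagFactor x z * diagFactor y t * offDiagFactor q z y
        + swapFactor q t z * (diagFactor x t * diagFactor y z * offDiagFactor q t y) := by
  rw [diagFactor_eq hx, diagFactor_eq hx, diagFactor_eq hy, diagFactor_eq hy,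
    offDiagFactor_eq hq hx hxz, offDiagFactor_eq hq hx hxt, offDiagFactor_eq hq hy hyz,
    offDiagFactor_eq hq hy hyt, swapFactor]
  have := sub_ne_zero.mpr hxz
  have := sub_ne_zero.mpr hxt
  have := sub_ne_zero.mpr hyz
  have := sub_ne_zero.mpr hyt
  have : z - t * q ^ 2 ≠ 0 := sub_ne_zero.mpr (mul_comm t (q ^ 2) ▸ hzt)
  field_simp
  ring

end Factors

section Adjacent

variable {α : Type*} [LinearOrder α] {a b m n : α}

lemma lt_swap_apply_of_covBy (hab : a ⋖ b) (hmn : m < n) (hne : (m, n) ≠ (a, b)) :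
    m < swap a b n := by
  rcases eq_or_ne n a with rfl | hna
  · rw [swap_apply_left]; exact hmn.trans hab.lt
  rcases eq_or_ne n b with rfl | hnb
  · rw [swap_apply_right]
    have hma : m ≠ a := fun h => hne (by rw [h])
    exact hma.lt_of_le (not_lt.mp fun ham => hab.2 ham hmn)
  · rwa [swap_apply_of_ne_of_ne hna hnb]

lemma swap_apply_lt_of_covBy (hab : a ⋖ b) (hmn : m < n) (hne : (m, n) ≠ (a, b)) :
    swap a b m < n := by
  rcases eq_or_ne m b with rfl | hmb
  · rw [swap_apply_right]; exact hab.lt.trans hmn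
  rcases eq_or_ne m a with rfl | hma
  · rw [swap_apply_left]
    have hnb : n ≠ b := fun h => hne (by rw [h])
    exact hnb.symm.lt_of_le (not_lt.mp fun hnb' => hab.2 hmn hnb')
  · rwa [swap_apply_of_ne_of_ne hma hmb]

variable [Fintype α]

variable (α) in
def ltPairs : Finset (α × α) :=
  univ.filter fun p => p.1 < p.2

lemma mem_erase_ltPairs {p : α × α} :
    p ∈ (ltPairs α).erase (a, b) ↔ p ≠ (a, b) ∧ p.1 < p.2 := by
  simp [ltPairs]

lemma swap_snd_mem_erase_ltPairs (hab : a ⋖ b) {p : α × α}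
    (hp : p ∈ (ltPairs α).erase (a, b)) :
    (p.1, swap a b p.2) ∈ (ltPairs α).erase (a, b) := by
  rw [mem_erase_ltPairs] at hp ⊢
  refine ⟨fun h => ?_, lt_swap_apply_of_covBy hab hp.2 hp.1⟩
  have hn : p.2 = a := by simpa using congrArg (swap a b) (Prod.ext_iff.mp h).2
  exact hp.2.ne ((Prod.ext_iff.mp h).1.trans hn.symm)

lemma swap_fst_mem_erase_ltPairs (hab : a ⋖ b) {p : α × α}
    (hp : p ∈ (ltPairs α).erase (a, b)) :
    (swap a b p.1, p.2) ∈ (ltPairs α).erase (a, b) := by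
  rw [mem_erase_ltPairs] at hp ⊢
  refine ⟨fun h => ?_, swap_apply_lt_of_covBy hab hp.2 hp.1⟩
  have hm : p.1 = b := by simpa using congrArg (swap a b) (Prod.ext_iff.mp h).1
  exact hp.2.ne (hm.trans (Prod.ext_iff.mp h).2.symm)

lemma swap_mem_erase_ltPairs (hab : a ⋖ b) {p : α × α}
    (hp : p ∈ (ltPairs α).erase (a, b)) :
    (swap a b p.1, swap a b p.2) ∈ (ltPairs α).erase (a, b) :=
  swap_fst_mem_erase_ltPairs hab (swap_snd_mem_erase_ltPairs hab hp)

def inversionProd {M : Type*} [CommMonoid M] (f : α → α → M) (σ : Perm α) : M :=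
  ∏ p ∈ univ.filter (fun p : α × α => p.1 < p.2 ∧ σ p.2 < σ p.1), f (σ p.1) (σ p.2)

lemma inversionProd_mul_swap {M : Type*} [CommMonoid M] (f : α → α → M) (hab : a ⋖ b)
    {σ : Perm α} (hσ : σ a < σ b) :
    inversionProd f (σ * swap a b) = f (σ b) (σ a) * inversionProd f σ := by
  have hmem : (a, b) ∈ univ.filter
      (fun p : α × α => p.1 < p.2 ∧ (σ * swap a b) p.2 < (σ * swap a b) p.1) := by
    rw [mem_filter, Perm.mul_apply, Perm.mul_apply, swap_apply_left, swap_apply_right]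
    exact ⟨mem_univ _, hab.lt, hσ⟩
  rw [inversionProd, ← mul_prod_erase _ _ hmem]
  congr 1
  · simp only [Perm.mul_apply, swap_apply_left, swap_apply_right]
  refine prod_equiv (prodCongr (swap a b) (swap a b)) (fun p => ?_) (fun _ _ => rfl)
  have hiff : p ∈ (ltPairs α).erase (a, b) ↔
      (swap a b p.1, swap a b p.2) ∈ (ltPairs α).erase (a, b) :=
    ⟨swap_mem_erase_ltPairs hab, fun h => by simpa using swap_mem_erase_ltPairs hab h⟩
  rw [mem_erase_ltPairs, mem_erase_ltPairs] at hiff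
  rw [mem_erase, mem_filter, mem_filter]
  simp only [mem_univ, true_and, prodCongr_apply, Prod.map, Perm.mul_apply]
  rw [← and_assoc, hiff, and_assoc, and_iff_right_of_imp]
  rintro ⟨-, hinv⟩ h
  rw [Prod.mk.injEq] at h
  rw [h.1, h.2] at hinv
  exact hinv.not_gt hσ

lemma sum_perm_eq_sum_filter_add_mul_swap {M : Type*} [AddCommMonoid M] (hab : a ≠ b)
    (f : Perm α → M) :
    ∑ σ, f σ = ∑ σ ∈ univ.filter (fun σ : Perm α => σ a < σ b), (f σ + f (σ * swap a b)) := by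
  rw [sum_add_distrib, ← sum_filter_add_sum_filter_not univ (fun σ : Perm α => σ a < σ b)]
  congr 1
  refine sum_equiv (Equiv.mulRight (swap a b)) (fun σ => ?_) (fun σ _ => by simp [mul_assoc])
  have : σ a ≠ σ b := σ.injective.ne hab
  simp only [mem_filter, mem_univ, true_and, coe_mulRight, Perm.mul_apply, swap_apply_left,
    swap_apply_right]
  exact not_lt.trans this.symm.le_iff_lt

end Adjacent

section Action

lemma actUV_algebraMap (ρ τ : Perm (Fin k)) (p : MvPolynomial (Fin k ⊕ Fin k) F0) :
    actUV k ρ τ (algebraMap _ (KU k) p) = algebraMap _ (KU k) (rename (sumCongr ρ τ) p) := by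
  simp [actUV]

@[simp]
lemma actUV_uV (ρ τ : Perm (Fin k)) (i : Fin k) : actUV k ρ τ (uV k i) = uV k (ρ i) := by
  simp [uV, actUV_algebraMap]

@[simp]
lemma actUV_vV (ρ τ : Perm (Fin k)) (i : Fin k) : actUV k ρ τ (vV k i) = vV k (τ i) := by
  simp [vV, actUV_algebraMap]

@[simp]
lemma actUV_qU (ρ τ : Perm (Fin k)) : actUV k ρ τ (qU k) = qU k := by
  simp [qU, actUV_algebraMap]

lemma actUV_actUV (ρ₁ τ₁ ρ₂ τ₂ : Perm (Fin k)) (x : KU k) :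
    actUV k ρ₁ τ₁ (actUV k ρ₂ τ₂ x) = actUV k (ρ₁ * ρ₂) (τ₁ * τ₂) x := by
  obtain ⟨p, r, -, rfl⟩ :=
    IsFractionRing.div_surjective (A := MvPolynomial (Fin k ⊕ Fin k) F0) x
  simp only [map_div₀, actUV_algebraMap, rename_rename, ← Perm.coe_mul, Perm.sumCongr_mul]

lemma actUV_one (x : KU k) : actUV k 1 1 x = x := by
  obtain ⟨p, r, -, rfl⟩ :=
    IsFractionRing.div_surjective (A := MvPolynomial (Fin k ⊕ Fin k) F0) x
  simp only [map_div₀, actUV_algebraMap, Perm.sumCongr_one, Perm.coe_one, rename_id_apply]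

end Action

section Nonvanishing

lemma qU_ne_zero : qU k ≠ 0 :=
  (map_ne_zero_iff _ (IsFractionRing.injective _ _)).mpr (C_ne_zero.mpr RatFunc.X_ne_zero)

lemma uV_ne_zero (i : Fin k) : uV k i ≠ 0 :=
  (map_ne_zero_iff _ (IsFractionRing.injective _ _)).mpr (X_ne_zero _)

lemma uV_ne_vV (i j : Fin k) : uV k i ≠ vV k j :=
  (IsFractionRing.injective _ _).ne ((X_injective (R := F0)).ne Sum.inl_ne_inr)

lemma vV_ne_qU_sq_mul_vV {i j : Fin k} (hij : i ≠ j) : vV k i ≠ qU k ^ 2 * vV k j := by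
  intro h
  have hpoly : (X (Sum.inr i) : MvPolynomial (Fin k ⊕ Fin k) F0) =
      C RatFunc.X ^ 2 * X (Sum.inr j) :=
    IsFractionRing.injective _ (KU k) (by simpa [qU, vV] using h)
  have := congrArg (eval fun s => if s = Sum.inr i then (1 : F0) else 0) hpoly
  simp [Ne.symm hij] at this

end Nonvanishing

section PairDecomposition

variable {a b : Fin k}

def pairFactor (a b : Fin k) : KU k :=
  diagFactor (uV k a) (vV k a) * diagFactor (uV k b) (vV k b) *
    offDiagFactor (qU k) (vV k a) (uV k b)

def restFactor (a b : Fin k) : KU k :=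
  (∏ i ∈ ({a, b} : Finset (Fin k))ᶜ, diagFactor (uV k i) (vV k i)) *
    ∏ p ∈ (ltPairs (Fin k)).erase (a, b), offDiagFactor (qU k) (vV k p.1) (uV k p.2)

lemma Uel_eq_pairFactor_mul_restFactor (hab : a < b) :
    Uel k = pairFactor k a b * restFactor k a b := by
  have hmem : (a, b) ∈ ltPairs (Fin k) := by simpa [ltPairs] using hab
  change (∏ i, diagFactor (uV k i) (vV k i)) *
      ∏ p ∈ ltPairs (Fin k), offDiagFactor (qU k) (vV k p.1) (uV k p.2) = _
  rw [← prod_mul_prod_compl {a, b}, prod_pair hab.ne, ← mul_prod_erase _ _ hmem,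
    pairFactor, restFactor]
  ring

lemma actUV_swap_one_restFactor (hab : a ⋖ b) :
    actUV k (swap a b) 1 (restFactor k a b) = restFactor k a b := by
  simp only [restFactor, map_mul, map_prod, map_diagFactor, map_offDiagFactor, actUV_uV,
    actUV_vV, actUV_qU, Perm.one_apply]
  congr 1
  · refine prod_congr rfl fun i hi => ?_
    simp only [mem_compl, mem_insert, mem_singleton, not_or] at hi
    rw [swap_apply_of_ne_of_ne hi.1 hi.2]
  · refine prod_equiv (prodCongr (Equiv.refl _) (swap a b)) (fun p => ?_) (fun _ _ => rfl)
    exact ⟨swap_snd_mem_erase_ltPairs hab,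
      fun h => by simpa using swap_snd_mem_erase_ltPairs hab h⟩

lemma actUV_one_swap_restFactor (hab : a ⋖ b) :
    actUV k 1 (swap a b) (restFactor k a b) = restFactor k a b := by
  simp only [restFactor, map_mul, map_prod, map_diagFactor, map_offDiagFactor, actUV_uV,
    actUV_vV, actUV_qU, Perm.one_apply]
  congr 1
  · refine prod_congr rfl fun i hi => ?_
    simp only [mem_compl, mem_insert, mem_singleton, not_or] at hi
    rw [swap_apply_of_ne_of_ne hi.1 hi.2]
  · refine prod_equiv (prodCongr (swap a b) (Equiv.refl _)) (fun p => ?_) (fun _ _ => rfl)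
    exact ⟨swap_fst_mem_erase_ltPairs hab,
      fun h => by simpa using swap_fst_mem_erase_ltPairs hab h⟩

lemma pairFactor_exchange (hab : a ≠ b) :
    actUV k (swap a b) 1 (pairFactor k a b)
        + swapFactor (qU k) (vV k b) (vV k a) * actUV k (swap a b) (swap a b) (pairFactor k a b)
      = pairFactor k a b
        + swapFactor (qU k) (vV k b) (vV k a) * actUV k 1 (swap a b) (pairFactor k a b) := by
  simp only [pairFactor, map_mul, map_diagFactor, map_offDiagFactor, actUV_uV, actUV_vV,
    actUV_qU, Perm.one_apply, swap_apply_left, swap_apply_right]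
  exact diagFactor_exchange (qU_ne_zero k) (uV_ne_zero k a) (uV_ne_zero k b) (uV_ne_vV k a a)
    (uV_ne_vV k a b) (uV_ne_vV k b a) (uV_ne_vV k b b) (vV_ne_qU_sq_mul_vV k hab)

end PairDecomposition

def symCoeff (σ : Perm (Fin k)) : KU k :=
  inversionProd (fun i j => swapFactor (qU k) (vV k i) (vV k j)) σ

lemma symV_eq_sum (G : KU k) : symV k G = ∑ σ, symCoeff k σ * actUV k 1 σ G := rfl

@[simp]
lemma actUV_symCoeff (ρ σ : Perm (Fin k)) : actUV k ρ 1 (symCoeff k σ) = symCoeff k σ := by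
  simp [symCoeff, inversionProd, map_prod]

lemma symCoeff_mul_swap {a b : Fin k} (hab : a ⋖ b) {σ : Perm (Fin k)} (hσ : σ a < σ b) :
    symCoeff k (σ * swap a b) =
      actUV k 1 σ (swapFactor (qU k) (vV k b) (vV k a)) * symCoeff k σ := by
  simp [symCoeff, inversionProd_mul_swap _ hab hσ]

theorem actUV_swap_symV_Uel {a b : Fin k} (hab : a ⋖ b) :
    actUV k (swap a b) 1 (symV k (Uel k)) = symV k (Uel k) := by
  rw [symV_eq_sum, map_sum]
  simp only [map_mul, actUV_symCoeff, actUV_actUV, mul_one, one_mul]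
  rw [sum_perm_eq_sum_filter_add_mul_swap hab.ne, sum_perm_eq_sum_filter_add_mul_swap hab.ne]
  refine sum_congr rfl fun σ hσ => ?_
  set R := restFactor k a b
  have hR : ∀ ρ τ : Perm (Fin k), (ρ = 1 ∨ ρ = swap a b) → (τ = 1 ∨ τ = swap a b) →
      actUV k ρ (σ * τ) (Uel k) = actUV k 1 σ (actUV k ρ τ (pairFactor k a b) * R) := by
    intro ρ τ hρ hτ
    have hRτ : actUV k 1 τ R = R := by
      rcases hτ with rfl | rfl
      exacts [actUV_one k R, actUV_one_swap_restFactor k hab]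
    have hRρ : actUV k ρ 1 R = R := by
      rcases hρ with rfl | rfl
      exacts [actUV_one k R, actUV_swap_one_restFactor k hab]
    rw [Uel_eq_pairFactor_mul_restFactor k hab.lt]
    have hRρτ : actUV k ρ τ R = R := calc
      actUV k ρ τ R = actUV k ρ 1 (actUV k 1 τ R) := by rw [actUV_actUV, mul_one, one_mul]
      _ = R := by rw [hRτ, hRρ]
    rw [← hRρτ, ← map_mul, actUV_actUV, one_mul]
  have e₁ := hR (swap a b) 1 (.inr rfl) (.inl rfl)
  have e₂ := hR (swap a b) (swap a b) (.inr rfl) (.inr rfl)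
  have e₃ := hR 1 1 (.inl rfl) (.inl rfl)
  have e₄ := hR 1 (swap a b) (.inl rfl) (.inr rfl)
  rw [mul_one] at e₁ e₃
  rw [actUV_one] at e₃
  have hx := congrArg (fun x => actUV k 1 σ (x * R)) (pairFactor_exchange k hab.ne)
  simp only [add_mul, map_add, map_mul] at hx
  rw [e₁, e₂, e₃, e₄, symCoeff_mul_swap k hab (mem_filter.mp hσ).2]
  simp only [map_mul]
  linear_combination symCoeff k σ * hx

lemma actUV_eq_self_of_forall_covBy {x : KU k}
    (h : ∀ a b : Fin k, a ⋖ b → actUV k (swap a b) 1 x = x) (ρ : Perm (Fin k)) :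
    actUV k ρ 1 x = x := by
  cases k with
  | zero => rw [Subsingleton.elim ρ 1, actUV_one]
  | succ n =>
    have hρ : ρ ∈ Submonoid.closure (Set.range fun i : Fin n => swap i.castSucc i.succ) := by
      rw [Perm.mclosure_swap_castSucc_succ]
      trivial
    induction hρ using Submonoid.closure_induction with
    | mem _ hσ =>
      obtain ⟨i, rfl⟩ := hσ
      exact h _ _ (Fin.covBy_iff.mpr (Nat.covBy_iff_add_one_eq.mpr rfl))
    | one => exact actUV_one _ x
    | mul σ τ _ _ hσ hτ => rw [← mul_one (1 : Perm (Fin (n + 1))), ← actUV_actUV, hτ, hσ]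

theorem statement8 (ρ : Equiv.Perm (Fin k)) :
    actUV k ρ (Equiv.refl (Fin k)) (symV k (Uel k)) = symV k (Uel k) :=
  actUV_eq_self_of_forall_covBy k (fun _ _ hab => actUV_swap_symV_Uel k hab) ρ

end
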